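/- (De Giorgi-type counter-example: explicit solutions.) Let ξ ≠ 0 be a real number and set ε = |ξ|/√(4 + ξ²). For x ∈ ℝ² \ {0} write e_r = x/|x| and define the elasticity tensor C̃(x)[L] = (L + Lᵀ)/2 + (4/ξ²) (e_r · L e_r) (e_r ⊗ e_r) for 2×2 matrices L, where e_r ⊗ e_r is the rank-one matrix with entries (e_r)_i (e_r)_j. Then: (a) for every x ≠ 0 and every symmetric 2×2 matrix E one has ⟪E, C̃(x)[E]⟫ = |E|² + (4/ξ²)(e_r · E e_r)², so that |E|² ≤ ⟪E, C̃(x)[E]⟫ ≤ (1 + 4/ξ²)|E|²; and (b) for all real c₁, c₂ the vector field u(x) = (c₁ |x|^ε + c₂ |x|^{−ε}) x/|x| is smooth on ℝ² \ {0}, the matrix field S(x) = C̃(x)[∇u(x)] is continuously differentiable on ℝ² \ {0}, and each row of S is divergence-free there: ∂_{x₁} S_{i1}(x) + ∂_{x₂} S_{i2}(x) = 0 for i = 1, 2 and all x ≠ 0 (i.e. u is a classical solution of div C̃[∇u] = 0 on ℝ² \ {0}). -/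

import Mathlib

open MeasureTheory Metric Set
open scoped ENNReal

noncomputable section

abbrev V2 := EuclideanSpace ℝ (Fin 2)
abbrev Mat2 := Matrix (Fin 2) (Fin 2) ℝ

/-- Frobenius inner product of 2×2 matrices. -/
def frobInner (A B : Mat2) : ℝ := ∑ i, ∑ j, A i j * B i j

/-- Square of the Frobenius norm. -/
def frobNormSq (A : Mat2) : ℝ := ∑ i, ∑ j, (A i j) ^ 2

/-- Frobenius norm. -/
def frobNorm (A : Mat2) : ℝ := Real.sqrt (frobNormSq A)

/-- Gradient matrix of a map `u : ℝ² → ℝ²`: `(grad u x) i j = ∂_{x_j} u_i (x)`. -/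
def grad (u : V2 → V2) (x : V2) : Mat2 :=
  Matrix.of fun i j => fderiv ℝ u x (EuclideanSpace.single j 1) i

/-- Radial unit vector `e_r = x/|x|`. -/
def eR (x : V2) : V2 := ‖x‖⁻¹ • x

/-- The quadratic form `e_r · L e_r`. -/
def quadForm (x : V2) (L : Mat2) : ℝ := ∑ i, ∑ j, eR x i * L i j * eR x j

/-- The rank-one matrix `e_r ⊗ e_r`. -/
def outerER (x : V2) : Mat2 := Matrix.of fun i j => eR x i * eR x j

/-- De Giorgi's elasticity tensor
`C̃(x)[L] = (L + Lᵀ)/2 + (4/ξ²)(e_r · L e_r)(e_r ⊗ e_r)`. -/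
def Ctilde (ξ : ℝ) (x : V2) (L : Mat2) : Mat2 :=
  (2⁻¹ : ℝ) • (L + L.transpose) + ((4 / ξ ^ 2) * quadForm x L) • outerER x

/-- The explicit radial field `u(x) = (c₁|x|^ε + c₂|x|^{-ε}) x/|x|`. -/
def deGiorgiField (ξ c₁ c₂ : ℝ) (x : V2) : V2 :=
  (c₁ * ‖x‖ ^ (|ξ| / Real.sqrt (4 + ξ ^ 2)) +
    c₂ * ‖x‖ ^ (-(|ξ| / Real.sqrt (4 + ξ ^ 2)))) • eR x


open scoped RealInnerProductSpace

lemma eR_normSq (x : V2) (hx : x ≠ 0) : (eR x 0)^2 + (eR x 1)^2 = 1 := by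
  have hn : ‖x‖ ≠ 0 := norm_ne_zero_iff.mpr hx
  have h : ‖x‖^2 = ∑ i, x i ^ 2 := by
    rw [EuclideanSpace.norm_eq, Real.sq_sqrt]
    · simp [sq_abs]
    · positivity
  simp only [eR, PiLp.smul_apply, smul_eq_mul]
  rw [Fin.sum_univ_two] at h
  field_simp
  linarith [h]

lemma csAux {a b c s t : ℝ} (h : s^2 + t^2 = 1) :
    (s^2*a + 2*s*t*b + t^2*c)^2 ≤ a^2 + 2*b^2 + c^2 := by
  have key : (a^2+2*b^2+c^2)*(s^2+t^2)^2 - (s^2*a + 2*s*t*b + t^2*c)^2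
      = 2*(a*s*t-b*s^2)^2 + (a*t^2-c*s^2)^2 + 2*(b*t^2-c*s*t)^2 := by ring
  have h2 : (s^2+t^2)^2 = 1 := by rw [h]; ring
  nlinarith [sq_nonneg (a*s*t-b*s^2), sq_nonneg (a*t^2-c*s^2), sq_nonneg (b*t^2-c*s*t)]

lemma partA (ξ : ℝ) (hξ : ξ ≠ 0) (x : V2) (hx : x ≠ 0) (E : Mat2) (hE : E.IsSymm) :
      frobInner E (Ctilde ξ x E) = frobNormSq E + (4 / ξ ^ 2) * quadForm x E ^ 2 ∧
      frobNormSq E ≤ frobInner E (Ctilde ξ x E) ∧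
      frobInner E (Ctilde ξ x E) ≤ (1 + 4 / ξ ^ 2) * frobNormSq E := by
  have hsym : E 1 0 = E 0 1 := by
    have := hE.apply (i := 0) (j := 1); simpa using this
  have hK : (0:ℝ) ≤ 4 / ξ ^ 2 := by positivity
  have he := eR_normSq x hx
  have heq : frobInner E (Ctilde ξ x E) = frobNormSq E + (4 / ξ ^ 2) * quadForm x E ^ 2 := by
    simp only [frobInner, frobNormSq, quadForm, Ctilde, outerER, Matrix.add_apply,
      Matrix.smul_apply, Matrix.of_apply, Matrix.transpose_apply, Fin.sum_univ_two,
      smul_eq_mul, hsym]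
    ring
  refine ⟨heq, ?_, ?_⟩
  · rw [heq]; nlinarith [sq_nonneg (quadForm x E)]
  · rw [heq]
    have hq : quadForm x E ^ 2 ≤ frobNormSq E := by
      have h1 : quadForm x E = eR x 0^2 * E 0 0 + 2*(eR x 0)*(eR x 1)*(E 0 1) + eR x 1^2 * E 1 1 := by
        simp only [quadForm, Fin.sum_univ_two, hsym]; ring
      have h2 : frobNormSq E = E 0 0^2 + 2*E 0 1^2 + E 1 1^2 := by
        simp only [frobNormSq, Fin.sum_univ_two, hsym]; ring
      rw [h1, h2]; exact csAux he
    nlinarith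


def Nsq (x : V2) : ℝ := ‖x‖ ^ 2

lemma Nsq_pos {x : V2} (hx : x ≠ 0) : 0 < Nsq x := by
  exact pow_pos (norm_pos_iff.mpr hx) 2

lemma Nsq_eq_sum (x : V2) : Nsq x = x 0 ^ 2 + x 1 ^ 2 := by
  simp only [Nsq, EuclideanSpace.norm_eq]
  rw [Real.sq_sqrt (by positivity)]
  simp [Fin.sum_univ_two, sq_abs]

lemma hasFDerivAt_Nsq (x : V2) : HasFDerivAt Nsq (2 • innerSL ℝ x) x :=
  (hasStrictFDerivAt_norm_sq x).hasFDerivAt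

/-- scalar power function -/
def pw (c p : ℝ) (x : V2) : ℝ := c * Nsq x ^ p

lemma hasFDerivAt_pw (c p : ℝ) {x : V2} (hx : x ≠ 0) :
    HasFDerivAt (pw c p) ((2 * c * p * Nsq x ^ (p - 1)) • (innerSL ℝ x)) x := by
  have h := (((hasFDerivAt_Nsq x).rpow_const (Or.inl (Nsq_pos hx).ne')).const_mul c :
    HasFDerivAt (fun y => c * Nsq y ^ p) _ x)
  refine HasFDerivAt.congr_fderiv h ?_
  ext v
  simp [two_smul, ContinuousLinearMap.smul_apply]
  ring

lemma contDiffAt_pw (c p : ℝ) {n : WithTop ℕ∞} {x : V2} (hx : x ≠ 0) :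
    ContDiffAt ℝ n (pw c p) x := by
  have h1 : ContDiffAt ℝ n (fun t : ℝ => t ^ p) (Nsq x) :=
    Real.contDiffAt_rpow_const_of_ne (Nsq_pos hx).ne'
  exact contDiffAt_const.mul (h1.comp x ((contDiff_norm_sq ℝ).contDiffAt))

/-- vector power term -/
def Wf (c p : ℝ) (x : V2) : V2 := pw c p x • x

lemma hasFDerivAt_Wf (c p : ℝ) {x : V2} (hx : x ≠ 0) :
    HasFDerivAt (Wf c p)
      (pw c p x • ContinuousLinearMap.id ℝ V2 +
        ((2 * c * p * Nsq x ^ (p - 1)) • (innerSL ℝ x)).smulRight x) x :=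
  (hasFDerivAt_pw c p hx).smul (hasFDerivAt_id x)

lemma contDiffAt_Wf (c p : ℝ) {n : WithTop ℕ∞} {x : V2} (hx : x ≠ 0) :
    ContDiffAt ℝ n (Wf c p) x :=
  (contDiffAt_pw c p hx).smul contDiffAt_id

section params
variable (ξ : ℝ)

def εx : ℝ := |ξ| / Real.sqrt (4 + ξ ^ 2)
def P1 : ℝ := (εx ξ - 1) / 2
def P2 : ℝ := (-εx ξ - 1) / 2
def Kx : ℝ := 4 / ξ ^ 2
def A1 : ℝ := 2 * P1 ξ + Kx ξ * (2 * P1 ξ + 1)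
def A2 : ℝ := 2 * P2 ξ + Kx ξ * (2 * P2 ξ + 1)

lemma eps_sq (hξ : ξ ≠ 0) : εx ξ ^ 2 = ξ ^ 2 / (4 + ξ ^ 2) := by
  have h4 : (0:ℝ) < 4 + ξ ^ 2 := by positivity
  rw [εx, div_pow, sq_abs, Real.sq_sqrt h4.le]

lemma key1 (hξ : ξ ≠ 0) : A1 ξ * (2 * P1 ξ + 1) + 2 * P1 ξ = 0 := by
  have h4 : (0:ℝ) < 4 + ξ ^ 2 := by positivity
  have he := eps_sq ξ hξ
  have h2 : 2 * P1 ξ + 1 = εx ξ := by rw [P1]; ring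
  rw [A1, h2]
  have hξ2 : ξ ^ 2 ≠ 0 := pow_ne_zero _ hξ
  have he' : εx ξ ^ 2 * (4 + ξ ^ 2) = ξ ^ 2 := by rw [he]; field_simp
  rw [Kx, P1]
  field_simp
  linear_combination he'

lemma key2 (hξ : ξ ≠ 0) : A2 ξ * (2 * P2 ξ + 1) + 2 * P2 ξ = 0 := by
  have h4 : (0:ℝ) < 4 + ξ ^ 2 := by positivity
  have he := eps_sq ξ hξ
  have h2 : 2 * P2 ξ + 1 = -εx ξ := by rw [P2]; ring
  rw [A2, h2]
  have hξ2 : ξ ^ 2 ≠ 0 := pow_ne_zero _ hξ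
  have he' : εx ξ ^ 2 * (4 + ξ ^ 2) = ξ ^ 2 := by rw [he]; field_simp
  rw [Kx, P2]
  field_simp
  linear_combination he'

variable (c₁ c₂ : ℝ)

/-- u written via Wf -/
lemma u_eq (x : V2) (hx : x ≠ 0) :
    deGiorgiField ξ c₁ c₂ x = Wf c₁ (P1 ξ) x + Wf c₂ (P2 ξ) x := by
  have hr : (0:ℝ) < ‖x‖ := norm_pos_iff.mpr hx
  have hpow : ∀ p : ℝ, Nsq x ^ p = ‖x‖ ^ (2 * p) := by
    intro p
    rw [Nsq, ← Real.rpow_natCast ‖x‖ 2, ← Real.rpow_mul hr.le]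
    norm_num
  simp only [deGiorgiField, Wf, pw, eR, hpow, smul_smul, ← add_smul]
  congr 1
  have h1 : ‖x‖ ^ (2 * P1 ξ) = ‖x‖ ^ (εx ξ) * ‖x‖⁻¹ := by
    rw [show 2 * P1 ξ = εx ξ - 1 by rw [P1]; ring, Real.rpow_sub hr, Real.rpow_one,
      div_eq_mul_inv]
  have h2 : ‖x‖ ^ (2 * P2 ξ) = ‖x‖ ^ (-εx ξ) * ‖x‖⁻¹ := by
    rw [show 2 * P2 ξ = -εx ξ - 1 by rw [P2]; ring, Real.rpow_sub hr, Real.rpow_one,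
      div_eq_mul_inv]
  rw [h1, h2, εx]
  ring

lemma hasFDerivAt_u {x : V2} (hx : x ≠ 0) :
    HasFDerivAt (deGiorgiField ξ c₁ c₂)
      ((pw c₁ (P1 ξ) x • ContinuousLinearMap.id ℝ V2 +
          ((2 * c₁ * P1 ξ * Nsq x ^ (P1 ξ - 1)) • (innerSL ℝ x)).smulRight x) +
        (pw c₂ (P2 ξ) x • ContinuousLinearMap.id ℝ V2 +
          ((2 * c₂ * P2 ξ * Nsq x ^ (P2 ξ - 1)) • (innerSL ℝ x)).smulRight x)) x := by
  have hW := (hasFDerivAt_Wf c₁ (P1 ξ) hx).add (hasFDerivAt_Wf c₂ (P2 ξ) hx)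
  refine hW.congr_of_eventuallyEq ?_
  filter_upwards [isOpen_compl_singleton.mem_nhds hx] with y hy
  exact u_eq ξ c₁ c₂ y hy

/-- shorthand scalar fields -/
def Gf (x : V2) : ℝ := pw c₁ (P1 ξ) x + pw c₂ (P2 ξ) x
def Gf' (x : V2) : ℝ := c₁ * P1 ξ * Nsq x ^ (P1 ξ - 1) + c₂ * P2 ξ * Nsq x ^ (P2 ξ - 1)
def Hf (x : V2) : ℝ :=
  c₁ * A1 ξ * Nsq x ^ (P1 ξ - 1) + c₂ * A2 ξ * Nsq x ^ (P2 ξ - 1)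

lemma grad_u_eq {x : V2} (hx : x ≠ 0) (i j : Fin 2) :
    grad (deGiorgiField ξ c₁ c₂) x i j
      = 2 * Gf' ξ c₁ c₂ x * x i * x j + Gf ξ c₁ c₂ x * (if i = j then 1 else 0) := by
  have h := hasFDerivAt_u ξ c₁ c₂ hx
  simp only [grad, Matrix.of_apply, h.fderiv]
  simp only [ContinuousLinearMap.add_apply, ContinuousLinearMap.smul_apply,
    ContinuousLinearMap.smulRight_apply, ContinuousLinearMap.id_apply, innerSL_apply_apply,
    PiLp.add_apply, PiLp.smul_apply, smul_eq_mul]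
  have hin : ⟪x, EuclideanSpace.single j (1:ℝ)⟫ = x j := by
    rw [EuclideanSpace.inner_single_right]; simp
  rw [hin]
  simp only [EuclideanSpace.single_apply, Gf, Gf']
  by_cases hij : i = j <;> simp [hij] <;> ring

lemma quad_grad_eq {x : V2} (hx : x ≠ 0) :
    quadForm x (grad (deGiorgiField ξ c₁ c₂) x)
      = 2 * Gf' ξ c₁ c₂ x * Nsq x + Gf ξ c₁ c₂ x := by
  have hr : (0:ℝ) < ‖x‖ := norm_pos_iff.mpr hx
  have hrel : ‖x‖⁻¹ * ‖x‖⁻¹ * Nsq x = 1 := by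
    rw [Nsq]; field_simp
  have hn : x 0 ^ 2 + x 1 ^ 2 = Nsq x := (Nsq_eq_sum x).symm
  simp only [quadForm, Fin.sum_univ_two, eR, PiLp.smul_apply, smul_eq_mul,
    grad_u_eq ξ c₁ c₂ hx]
  norm_num
  set a := x 0
  set b := x 1
  set G := Gf ξ c₁ c₂ x
  set G' := Gf' ξ c₁ c₂ x
  set n := Nsq x
  set r1 := ‖x‖⁻¹
  linear_combination (r1*r1*(2*G'*(a^2+b^2+n) + G)) * hn + (2*G'*n + G) * hrel

lemma Hf_eq {x : V2} (hx : x ≠ 0) :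
    Hf ξ c₁ c₂ x = 2 * Gf' ξ c₁ c₂ x +
      Kx ξ * (2 * Gf' ξ c₁ c₂ x * Nsq x + Gf ξ c₁ c₂ x) * (‖x‖⁻¹ * ‖x‖⁻¹) := by
  have hn0 : Nsq x ≠ 0 := (Nsq_pos hx).ne'
  have hrel : ‖x‖⁻¹ * ‖x‖⁻¹ * Nsq x = 1 := by
    rw [Nsq]; have hr : (0:ℝ) < ‖x‖ := norm_pos_iff.mpr hx; field_simp
  have hp1 : Nsq x ^ P1 ξ = Nsq x ^ (P1 ξ - 1) * Nsq x := by
    rw [show P1 ξ = (P1 ξ - 1) + 1 by ring, Real.rpow_add_one hn0,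
      show P1 ξ - 1 + 1 - 1 = P1 ξ - 1 by ring]
  have hp2 : Nsq x ^ P2 ξ = Nsq x ^ (P2 ξ - 1) * Nsq x := by
    rw [show P2 ξ = (P2 ξ - 1) + 1 by ring, Real.rpow_add_one hn0,
      show P2 ξ - 1 + 1 - 1 = P2 ξ - 1 by ring]
  simp only [Hf, Gf, Gf', pw, A1, A2, hp1, hp2]
  set t1 := Nsq x ^ (P1 ξ - 1)
  set t2 := Nsq x ^ (P2 ξ - 1)
  set n := Nsq x
  set r1 := ‖x‖⁻¹
  linear_combination (-(Kx ξ) * (2*(c₁*P1 ξ*t1 + c₂*P2 ξ*t2) + c₁*t1 + c₂*t2)) * hrel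

lemma S_entry {x : V2} (hx : x ≠ 0) (i j : Fin 2) :
    Ctilde ξ x (grad (deGiorgiField ξ c₁ c₂) x) i j
      = Hf ξ c₁ c₂ x * x i * x j + Gf ξ c₁ c₂ x * (if i = j then 1 else 0) := by
  simp only [Ctilde, Matrix.add_apply, Matrix.smul_apply, Matrix.transpose_apply,
    outerER, Matrix.of_apply, smul_eq_mul, quad_grad_eq ξ c₁ c₂ hx,
    grad_u_eq ξ c₁ c₂ hx, eR, PiLp.smul_apply]
  rw [Hf_eq ξ c₁ c₂ hx]
  show (2⁻¹:ℝ) * _ + (4 / ξ ^ 2) * _ * _ = _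
  rw [show (4 / ξ^2 : ℝ) = Kx ξ from rfl]
  by_cases hij : i = j
  · subst hij; simp only [if_pos rfl]; ring
  · rw [if_neg hij, if_neg (Ne.symm hij)]; ring

lemma contDiffAt_rpowNsq (p : ℝ) {n : WithTop ℕ∞} {x : V2} (hx : x ≠ 0) :
    ContDiffAt ℝ n (fun y => Nsq y ^ p) x :=
  (Real.contDiffAt_rpow_const_of_ne (Nsq_pos hx).ne').comp x ((contDiff_norm_sq ℝ).contDiffAt)

lemma hcoordCLM (k : Fin 2) :
    (⇑(innerSL ℝ (EuclideanSpace.single k (1:ℝ))) : V2 → ℝ) = fun y => y k := by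
  funext y
  rw [innerSL_apply_apply, EuclideanSpace.inner_single_left]
  simp

lemma hasFDerivAt_coord (k : Fin 2) (x : V2) :
    HasFDerivAt (fun y : V2 => y k) (innerSL ℝ (EuclideanSpace.single k (1:ℝ))) x := by
  have h := (innerSL ℝ (EuclideanSpace.single k (1:ℝ))).hasFDerivAt (x := x)
  rwa [hcoordCLM] at h

lemma contDiffAt_coord (k : Fin 2) {n : WithTop ℕ∞} {x : V2} :
    ContDiffAt ℝ n (fun y : V2 => y k) x := by
  have h := (innerSL ℝ (EuclideanSpace.single k (1:ℝ))).contDiff (n := n)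
  rw [hcoordCLM] at h
  exact h.contDiffAt

/-- Goal 1 -/
lemma goal1 : ContDiffOn ℝ (⊤ : ℕ∞) (deGiorgiField ξ c₁ c₂) {(0 : V2)}ᶜ := by
  have h : ContDiffOn ℝ (⊤ : ℕ∞) (fun x => Wf c₁ (P1 ξ) x + Wf c₂ (P2 ξ) x) {(0 : V2)}ᶜ :=
    fun x hx => (((contDiffAt_Wf c₁ (P1 ξ) hx).add (contDiffAt_Wf c₂ (P2 ξ) hx))).contDiffWithinAt
  exact h.congr fun x hx => u_eq ξ c₁ c₂ x hx

/-- Goal 2 -/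
lemma goal2 (i j : Fin 2) :
    ContDiffOn ℝ 1 (fun x => Ctilde ξ x (grad (deGiorgiField ξ c₁ c₂) x) i j)
      {(0 : V2)}ᶜ := by
  have h : ContDiffOn ℝ 1
      (fun x => Hf ξ c₁ c₂ x * x i * x j + Gf ξ c₁ c₂ x * (if i = j then 1 else 0))
      {(0 : V2)}ᶜ := by
    intro x hx
    have hH : ContDiffAt ℝ 1 (Hf ξ c₁ c₂) x :=
      ((contDiffAt_const.mul (contDiffAt_rpowNsq (P1 ξ - 1) hx)).add
        (contDiffAt_const.mul (contDiffAt_rpowNsq (P2 ξ - 1) hx)))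
    have hG : ContDiffAt ℝ 1 (Gf ξ c₁ c₂) x :=
      (contDiffAt_pw c₁ (P1 ξ) hx).add (contDiffAt_pw c₂ (P2 ξ) hx)
    exact (((hH.mul (contDiffAt_coord i)).mul (contDiffAt_coord j)).add
      (hG.mul contDiffAt_const)).contDiffWithinAt
  exact h.congr fun x hx => S_entry ξ c₁ c₂ hx i j

/-- Goal 3: divergence-free -/
lemma goal3 (hξ : ξ ≠ 0) {x : V2} (hx : x ≠ 0) (i : Fin 2) :
    ∑ j : Fin 2,
      fderiv ℝ (fun y => Ctilde ξ y (grad (deGiorgiField ξ c₁ c₂) y) i j) x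
        (EuclideanSpace.single j 1) = 0 := by
  have hH : HasFDerivAt (Hf ξ c₁ c₂)
      (((2 * (c₁ * A1 ξ) * (P1 ξ - 1) * Nsq x ^ (P1 ξ - 1 - 1)) • innerSL ℝ x) +
        ((2 * (c₂ * A2 ξ) * (P2 ξ - 1) * Nsq x ^ (P2 ξ - 1 - 1)) • innerSL ℝ x)) x := by
    have h := (hasFDerivAt_pw (c₁ * A1 ξ) (P1 ξ - 1) hx).add
      (hasFDerivAt_pw (c₂ * A2 ξ) (P2 ξ - 1) hx)
    have hfun : (fun y => pw (c₁ * A1 ξ) (P1 ξ - 1) y + pw (c₂ * A2 ξ) (P2 ξ - 1) y)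
        = Hf ξ c₁ c₂ := by
      funext y; simp only [pw, Hf]; try ring
    rw [← hfun]; exact h
  have hG : HasFDerivAt (Gf ξ c₁ c₂)
      (((2 * c₁ * P1 ξ * Nsq x ^ (P1 ξ - 1)) • innerSL ℝ x) +
        ((2 * c₂ * P2 ξ * Nsq x ^ (P2 ξ - 1)) • innerSL ℝ x)) x :=
    (hasFDerivAt_pw c₁ (P1 ξ) hx).add (hasFDerivAt_pw c₂ (P2 ξ) hx)
  have hEq : ∀ j : Fin 2,
      (fun y => Ctilde ξ y (grad (deGiorgiField ξ c₁ c₂) y) i j) =ᶠ[nhds x]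
        (fun y => Hf ξ c₁ c₂ y * y i * y j + Gf ξ c₁ c₂ y * (if i = j then 1 else 0)) := by
    intro j
    filter_upwards [isOpen_compl_singleton.mem_nhds hx] with y hy
    exact S_entry ξ c₁ c₂ hy i j
  have hSj := fun (j : Fin 2) =>
    ((((hH.mul (hasFDerivAt_coord i x)).mul (hasFDerivAt_coord j x)).add
      (hG.mul_const (if i = j then (1:ℝ) else 0))).congr_of_eventuallyEq (hEq j))
  rw [Fin.sum_univ_two, (hSj 0).fderiv, (hSj 1).fderiv]
  have hsingle : ∀ k j : Fin 2,
      innerSL ℝ (EuclideanSpace.single k (1:ℝ)) (EuclideanSpace.single j (1:ℝ))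
        = if k = j then 1 else 0 := by
    intro k j
    rw [innerSL_apply_apply, EuclideanSpace.inner_single_left]
    simp [EuclideanSpace.single_apply]
  have hxin : ∀ j : Fin 2, innerSL ℝ x (EuclideanSpace.single j (1:ℝ)) = x j := by
    intro j
    rw [innerSL_apply_apply, EuclideanSpace.inner_single_right]
    simp
  simp only [ContinuousLinearMap.add_apply, ContinuousLinearMap.smul_apply, smul_eq_mul,
    hsingle, hxin]
  have ht1 : Nsq x ^ (P1 ξ - 1) = Nsq x ^ (P1 ξ - 1 - 1) * Nsq x := by
    rw [show P1 ξ - 1 = (P1 ξ - 1 - 1) + 1 by ring, Real.rpow_add_one (Nsq_pos hx).ne',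
      show P1 ξ - 1 - 1 + 1 - 1 = P1 ξ - 1 - 1 by ring]
  have ht2 : Nsq x ^ (P2 ξ - 1) = Nsq x ^ (P2 ξ - 1 - 1) * Nsq x := by
    rw [show P2 ξ - 1 = (P2 ξ - 1 - 1) + 1 by ring, Real.rpow_add_one (Nsq_pos hx).ne',
      show P2 ξ - 1 - 1 + 1 - 1 = P2 ξ - 1 - 1 by ring]
  have hn : x 0 ^ 2 + x 1 ^ 2 = Nsq x := (Nsq_eq_sum x).symm
  have k1 := key1 ξ hξ
  have k2 := key2 ξ hξ
  set t1 := Nsq x ^ (P1 ξ - 1)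
  set t2 := Nsq x ^ (P2 ξ - 1)
  set s1 := Nsq x ^ (P1 ξ - 1 - 1)
  set s2 := Nsq x ^ (P2 ξ - 1 - 1)
  fin_cases i
  · norm_num
    simp only [Hf, Fin.mk_zero, Fin.mk_one]
    linear_combination (c₁*t1*x 0)*k1 + (c₂*t2*x 0)*k2 +
      ((2*c₁*A1 ξ*(P1 ξ-1)*s1 + 2*c₂*A2 ξ*(P2 ξ-1)*s2)*x 0)*hn +
      (-(2*c₁*A1 ξ*(P1 ξ-1)*x 0))*ht1 + (-(2*c₂*A2 ξ*(P2 ξ-1)*x 0))*ht2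
  · norm_num
    simp only [Hf, Fin.mk_zero, Fin.mk_one]
    linear_combination (c₁*t1*x 1)*k1 + (c₂*t2*x 1)*k2 +
      ((2*c₁*A1 ξ*(P1 ξ-1)*s1 + 2*c₂*A2 ξ*(P2 ξ-1)*s2)*x 1)*hn +
      (-(2*c₁*A1 ξ*(P1 ξ-1)*x 1))*ht1 + (-(2*c₂*A2 ξ*(P2 ξ-1)*x 1))*ht2

end params

/-- De Giorgi-type counter-example: explicit solutions of `div C̃[∇u] = 0`
on `ℝ² \ {0}`. -/
theorem deGiorgi_counterexample (ξ : ℝ) (hξ : ξ ≠ 0) :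
    -- (a) ellipticity of `C̃`
    (∀ x : V2, x ≠ 0 → ∀ E : Mat2, E.IsSymm →
      frobInner E (Ctilde ξ x E) = frobNormSq E + (4 / ξ ^ 2) * quadForm x E ^ 2 ∧
      frobNormSq E ≤ frobInner E (Ctilde ξ x E) ∧
      frobInner E (Ctilde ξ x E) ≤ (1 + 4 / ξ ^ 2) * frobNormSq E) ∧
    -- (b) `u` is a classical solution of `div C̃[∇u] = 0` away from the origin
    (∀ c₁ c₂ : ℝ,
      ContDiffOn ℝ (⊤ : ℕ∞) (deGiorgiField ξ c₁ c₂) {(0 : V2)}ᶜ ∧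
      (∀ i j : Fin 2,
        ContDiffOn ℝ 1 (fun x => Ctilde ξ x (grad (deGiorgiField ξ c₁ c₂) x) i j)
          {(0 : V2)}ᶜ) ∧
      ∀ x : V2, x ≠ 0 → ∀ i : Fin 2,
        ∑ j : Fin 2,
          fderiv ℝ (fun y => Ctilde ξ y (grad (deGiorgiField ξ c₁ c₂) y) i j) x
            (EuclideanSpace.single j 1) = 0) := by
  refine ⟨fun x hx E hE => partA ξ hξ x hx E hE, fun c₁ c₂ =>
    ⟨goal1 ξ c₁ c₂, fun i j => goal2 ξ c₁ c₂ i j, fun x hx i => goal3 ξ c₁ c₂ hξ hx i⟩⟩
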